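/- arXiv:1503.02831 — 3 statements merged into one kernel-verified Lean document; each statement's English description precedes it below -/
import Mathlib

section
/- For a, b, s > 0, the integral ∫₀^∞ exp(-s·x - (x + a²)/(2b)) · I₀(a·√x/b) dx equals (2b/(2sb+1)) · exp(a²·s/(2sb+1)) [with I₀ the modified Bessel function of the first kind of order 0]. Equivalently, the Laplace transform of the noncentral chi-square type density x ↦ (1/(2b)) exp(-(x+a²)/(2b)) I₀(a√x/b) at s is (1/(2sb+1)) exp(-a²s/(2sb+1)). -/
/-! Expanding `I₀(t√x) = ∑ (t²/4)ᵏ xᵏ / (k!)²` and integrating termwise against `e^{-cx}`, the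
`k`-th term contributes `(t²/4c)ᵏ / (k! c)`, so the series sums to `exp (t²/4c) / c`. The theorem is
this Laplace transform at `c = s + 1/(2b)`, `t = a/b`. -/

open Real MeasureTheory Set

/-- Modified Bessel function of the first kind of order 0. -/
noncomputable def besselI0 (z : ℝ) : ℝ := ∑' k : ℕ, (z / 2) ^ (2 * k) / ((Nat.factorial k : ℝ)) ^ 2

open scoped Nat

lemma integrableOn_pow_mul_exp_neg_mul_Ioi {c : ℝ} (hc : 0 < c) (k : ℕ) :
    IntegrableOn (fun x : ℝ => x ^ k * exp (-(c * x))) (Ioi 0) := by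
  simpa [Real.rpow_natCast] using
    integrableOn_rpow_mul_exp_neg_mul_rpow (s := k) (p := 1) (by linarith [k.cast_nonneg (α := ℝ)])
      one_pos hc

lemma integral_pow_mul_exp_neg_mul_Ioi {c : ℝ} (hc : 0 < c) (k : ℕ) :
    ∫ x in Ioi (0 : ℝ), x ^ k * exp (-(c * x)) = k ! / c ^ (k + 1) := by
  have h := integral_rpow_mul_exp_neg_mul_Ioi (a := k + 1) (by positivity) hc
  rw [add_sub_cancel_right, Real.Gamma_nat_eq_factorial, ← Nat.cast_succ, Real.rpow_natCast]
    at h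
  simpa [Real.rpow_natCast, div_eq_inv_mul] using h

lemma besselI0_mul_sqrt (t : ℝ) {x : ℝ} (hx : 0 ≤ x) :
    besselI0 (t * √x) = ∑' k : ℕ, (t ^ 2 / 4) ^ k / (k ! : ℝ) ^ 2 * x ^ k := by
  have hsq : (t * √x / 2) ^ 2 = t ^ 2 / 4 * x := by
    rw [div_pow, mul_pow, Real.sq_sqrt hx]
    ring
  refine tsum_congr fun k => ?_
  rw [pow_mul, hsq, mul_pow]
  ring

theorem integral_exp_neg_mul_mul_besselI0_mul_sqrt {c : ℝ} (hc : 0 < c) (t : ℝ) :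
    ∫ x in Ioi (0 : ℝ), exp (-(c * x)) * besselI0 (t * √x) = exp (t ^ 2 / (4 * c)) / c := by
  set d := t ^ 2 / 4
  let F : ℕ → ℝ → ℝ := fun k x => d ^ k / (k ! : ℝ) ^ 2 * (x ^ k * exp (-(c * x)))
  have hF_int (k : ℕ) : IntegrableOn (F k) (Ioi 0) :=
    (integrableOn_pow_mul_exp_neg_mul_Ioi hc k).const_mul _
  have hF_integral (k : ℕ) : ∫ x in Ioi (0 : ℝ), F k x = (d / c) ^ k / k ! / c := by
    simp only [F]
    rw [integral_const_mul, integral_pow_mul_exp_neg_mul_Ioi hc k, div_pow d]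
    field_simp
    ring
  have hF_norm (k : ℕ) : ∫ x in Ioi (0 : ℝ), ‖F k x‖ = ∫ x in Ioi (0 : ℝ), F k x :=
    setIntegral_congr_fun measurableSet_Ioi fun x (hx : 0 < x) =>
      Real.norm_of_nonneg (by positivity)
  have hexp : HasSum (fun k => (d / c) ^ k / k ! / c) (exp (d / c) / c) := by
    rw [Real.exp_eq_exp_ℝ]
    exact (NormedSpace.expSeries_div_hasSum_exp (d / c)).div_const c
  have hsum := hasSum_integral_of_summable_integral_norm hF_int
    (by simpa only [hF_norm, hF_integral] using hexp.summable)
  simp only [hF_integral] at hsum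
  calc ∫ x in Ioi (0 : ℝ), exp (-(c * x)) * besselI0 (t * √x)
      = ∫ x in Ioi (0 : ℝ), ∑' k, F k x := by
        refine setIntegral_congr_fun measurableSet_Ioi fun x (hx : 0 < x) => ?_
        rw [besselI0_mul_sqrt t hx.le, ← tsum_mul_left]
        exact tsum_congr fun k => by ring
    _ = exp (t ^ 2 / (4 * c)) / c := by
        rw [hsum.unique hexp, div_div, mul_comm 4 c]

lemma integral_exp_sub_mul_besselI0_sqrt_div (a : ℝ) {b s : ℝ} (hb : 0 < b)
    (hsb : 0 < 2 * s * b + 1) :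
    ∫ x in Ioi (0 : ℝ), exp (-s * x - (x + a ^ 2) / (2 * b)) * besselI0 (a * √x / b) =
      2 * b / (2 * s * b + 1) * exp (-(a ^ 2 * s) / (2 * s * b + 1)) := by
  set c := s + 1 / (2 * b)
  have hc_eq : c = (2 * s * b + 1) / (2 * b) := by
    simp only [c]
    field_simp
  have hc : 0 < c := hc_eq ▸ by positivity
  have hc_inv : 1 / c = 2 * b / (2 * s * b + 1) := by
    rw [hc_eq, one_div_div]
  have hexponent : -(a ^ 2 / (2 * b)) + (a / b) ^ 2 / (4 * c) =
      -(a ^ 2 * s) / (2 * s * b + 1) := by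
    rw [hc_eq, ← neg_div, div_add_div _ _ (by positivity) (by positivity),
      div_eq_div_iff (by positivity) hsb.ne']
    field_simp
    ring
  calc _ = exp (-(a ^ 2 / (2 * b))) *
        ∫ x in Ioi (0 : ℝ), exp (-(c * x)) * besselI0 (a / b * √x) := by
        rw [← integral_const_mul]
        refine setIntegral_congr_fun measurableSet_Ioi fun x _ => ?_
        have hsplit : -s * x - (x + a ^ 2) / (2 * b) = -(a ^ 2 / (2 * b)) + -(c * x) := by
          simp only [c]
          ring
        rw [hsplit, exp_add, div_mul_eq_mul_div, mul_assoc]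
    _ = _ := by
        rw [integral_exp_neg_mul_mul_besselI0_mul_sqrt hc, mul_div_assoc', ← exp_add, hexponent,
          ← hc_inv, one_div_mul_eq_div]

theorem stmt_0_general (a b s : ℝ) (hb : 0 < b) (hs : 0 < s) :
    (∫ x in Ioi (0 : ℝ),
        Real.exp (-s * x - (x + a ^ 2) / (2 * b)) * besselI0 (a * Real.sqrt x / b)) =
      (2 * b / (2 * s * b + 1)) * Real.exp (-(a ^ 2 * s) / (2 * s * b + 1)) ∧
    (∫ x in Ioi (0 : ℝ),
        Real.exp (-s * x) *
          ((1 / (2 * b)) * Real.exp (-(x + a ^ 2) / (2 * b)) * besselI0 (a * Real.sqrt x / b))) =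
      (1 / (2 * s * b + 1)) * Real.exp (-(a ^ 2 * s) / (2 * s * b + 1)) := by
  have hsb : 0 < 2 * s * b + 1 := by positivity
  have hkernel := integral_exp_sub_mul_besselI0_sqrt_div a hb hsb
  refine ⟨hkernel, ?_⟩
  calc _ = 1 / (2 * b) * ∫ x in Ioi (0 : ℝ),
        exp (-s * x - (x + a ^ 2) / (2 * b)) * besselI0 (a * √x / b) := by
        rw [← integral_const_mul]
        refine setIntegral_congr_fun measurableSet_Ioi fun x _ => ?_
        rw [sub_eq_add_neg, exp_add, neg_div]
        ring
    _ = _ := by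
        rw [hkernel]
        field_simp

/-- Laplace transform of the noncentral chi-square type density:
for `a, b, s > 0`,
`∫₀^∞ (1/(2b)) exp(-(x+a²)/(2b)) I₀(a√x/b) exp(-s x) dx = (1/(2sb+1)) exp(-a²s/(2sb+1))`,
equivalently
`∫₀^∞ exp(-s·x - (x+a²)/(2b)) I₀(a√x/b) dx = (2b/(2sb+1)) exp(-a²s/(2sb+1))`. -/
theorem stmt_0 (a b s : ℝ) (ha : 0 < a) (hb : 0 < b) (hs : 0 < s) :
    (∫ x in Ioi (0 : ℝ),
        Real.exp (-s * x - (x + a ^ 2) / (2 * b)) * besselI0 (a * Real.sqrt x / b)) =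
      (2 * b / (2 * s * b + 1)) * Real.exp (-(a ^ 2 * s) / (2 * s * b + 1)) ∧
    (∫ x in Ioi (0 : ℝ),
        Real.exp (-s * x) *
          ((1 / (2 * b)) * Real.exp (-(x + a ^ 2) / (2 * b)) * besselI0 (a * Real.sqrt x / b))) =
      (1 / (2 * s * b + 1)) * Real.exp (-(a ^ 2 * s) / (2 * s * b + 1)) :=
  stmt_0_general a b s hb hs
end

section
/- For α > 0, A ≥ 0, b₀ > 0, the conditional MGF factor satisfies the pointwise limit: for each fixed b > 0, (1/(2bs+1)) exp(-A s/(2bs+1)) · s → (1/(2b)) exp(-A/(2b)) as s → ∞. Consequently the H-K MGF M(s) = ((α/b₀)^α/Γ(α)) ∫₀^∞ (b^{α-1}/(2bs+1)) exp(-As/(2bs+1) - αb/b₀) db satisfies lim_{s→∞} s·M(s) = ((α/b₀)^α/(2Γ(α))) ∫₀^∞ b^{α-2} exp(-A/(2b) - αb/b₀) db, provided α > 1 (or the integral converges). -/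
/-! With `t = s / (2bs + 1)`, `s` times the Rician factor is `t e^{-At}`, and `t → 1/(2b)`; this
gives the pointwise limit. For `A ≥ 0` and `s ≥ 0` we have `0 ≤ t ≤ 1/(2b)` and `e^{-At} ≤ 1`, so
`s` times the H-K integrand is dominated by `b^{α-2} e^{-αb/b₀} / 2`, which is integrable on
`(0, ∞)` when `α > 1`, and dominated convergence moves the limit inside the integral. -/

open Real MeasureTheory Set Filter Topology

lemma tendsto_div_mul_add_one_atTop {c : ℝ} (hc : c ≠ 0) :
    Tendsto (fun s : ℝ => s / (c * s + 1)) atTop (𝓝 c⁻¹) := by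
  have h : Tendsto (fun s : ℝ => c + s⁻¹) atTop (𝓝 c) := by
    simpa using tendsto_inv_atTop_zero.const_add c
  refine (h.inv₀ hc).congr' ?_
  filter_upwards [eventually_gt_atTop 0] with s hs
  field_simp

lemma div_mul_add_one_le_inv {c s : ℝ} (hc : 0 < c) (hs : 0 ≤ s) : s / (c * s + 1) ≤ c⁻¹ := by
  rw [div_le_iff₀ (by positivity), inv_mul_eq_div, le_div_iff₀ hc]
  linarith

lemma rician_factor_mul_eq (A b s : ℝ) :
    1 / (2 * b * s + 1) * exp (-A * s / (2 * b * s + 1)) * s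
      = s / (2 * b * s + 1) * exp (-A * (s / (2 * b * s + 1))) := by
  rw [mul_div_assoc]
  ring

lemma tendsto_rician_factor_mul_atTop (A : ℝ) {b : ℝ} (hb : 0 < b) :
    Tendsto (fun s => 1 / (2 * b * s + 1) * exp (-A * s / (2 * b * s + 1)) * s) atTop
      (𝓝 (1 / (2 * b) * exp (-A / (2 * b)))) := by
  have ht := tendsto_div_mul_add_one_atTop (mul_ne_zero two_ne_zero hb.ne')
  simp_rw [rician_factor_mul_eq, one_div, div_eq_mul_inv (-A)]
  exact ht.mul ((continuous_exp.tendsto _).comp (ht.const_mul (-A)))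

noncomputable def hkIntegrand (α A b₀ s b : ℝ) : ℝ :=
  b ^ (α - 1) / (2 * b * s + 1) * exp (-A * s / (2 * b * s + 1) - α * b / b₀)

lemma mul_hkIntegrand_eq (α A b₀ s b : ℝ) :
    s * hkIntegrand α A b₀ s b = b ^ (α - 1) * exp (-(α * b / b₀)) *
      (1 / (2 * b * s + 1) * exp (-A * s / (2 * b * s + 1)) * s) := by
  rw [hkIntegrand, exp_sub, exp_neg]
  ring

lemma rpow_sub_one_mul_one_div_two_mul {b : ℝ} (hb : 0 < b) (α : ℝ) :
    b ^ (α - 1) * (1 / (2 * b)) = 1 / 2 * b ^ (α - 2) := by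
  rw [show α - 2 = α - 1 - 1 by ring, rpow_sub_one hb.ne' (α - 1)]
  ring

lemma tendsto_mul_hkIntegrand_atTop (α A b₀ : ℝ) {b : ℝ} (hb : 0 < b) :
    Tendsto (fun s => s * hkIntegrand α A b₀ s b) atTop
      (𝓝 (1 / 2 * (b ^ (α - 2) * exp (-A / (2 * b) - α * b / b₀)))) := by
  simp_rw [mul_hkIntegrand_eq]
  convert (tendsto_rician_factor_mul_atTop A hb).const_mul (b ^ (α - 1) * exp (-(α * b / b₀)))
    using 2
  rw [exp_sub, exp_neg, ← mul_assoc, ← rpow_sub_one_mul_one_div_two_mul hb]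
  ring

lemma mul_hkIntegrand_nonneg (α A b₀ : ℝ) {s b : ℝ} (hs : 0 ≤ s) (hb : 0 < b) :
    0 ≤ s * hkIntegrand α A b₀ s b := by
  unfold hkIntegrand
  positivity

lemma mul_hkIntegrand_le (α b₀ : ℝ) {A s b : ℝ} (hA : 0 ≤ A) (hs : 0 ≤ s) (hb : 0 < b) :
    s * hkIntegrand α A b₀ s b ≤ 1 / 2 * (b ^ (α - 2) * exp (-(α / b₀) * b ^ (1 : ℝ))) := by
  have ht : s / (2 * b * s + 1) ≤ 1 / (2 * b) := by
    simpa using div_mul_add_one_le_inv (by positivity : 0 < 2 * b) hs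
  have hexp : exp (-A * (s / (2 * b * s + 1))) ≤ 1 :=
    exp_le_one_iff.2 (mul_nonpos_of_nonpos_of_nonneg (by linarith) (by positivity))
  calc s * hkIntegrand α A b₀ s b
      = b ^ (α - 1) * exp (-(α * b / b₀)) *
          (s / (2 * b * s + 1) * exp (-A * (s / (2 * b * s + 1)))) := by
        rw [mul_hkIntegrand_eq, rician_factor_mul_eq]
    _ ≤ b ^ (α - 1) * exp (-(α * b / b₀)) * (1 / (2 * b) * 1) := by
        gcongr
    _ = 1 / 2 * (b ^ (α - 2) * exp (-(α / b₀) * b ^ (1 : ℝ))) := by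
        rw [rpow_one, mul_one, mul_right_comm, rpow_sub_one_mul_one_div_two_mul hb]
        ring_nf

lemma tendsto_integral_mul_hkIntegrand_atTop {α A b₀ : ℝ} (hα : 1 < α) (hA : 0 ≤ A)
    (hb₀ : 0 < b₀) :
    Tendsto (fun s => ∫ b in Ioi 0, s * hkIntegrand α A b₀ s b) atTop
      (𝓝 (∫ b in Ioi 0, 1 / 2 * (b ^ (α - 2) * exp (-A / (2 * b) - α * b / b₀)))) := by
  refine tendsto_integral_filter_of_dominated_convergence
    (fun b => 1 / 2 * (b ^ (α - 2) * exp (-(α / b₀) * b ^ (1 : ℝ)))) ?_ ?_ ?_ ?_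
  · exact Eventually.of_forall fun s => by unfold hkIntegrand; fun_prop
  · filter_upwards [eventually_ge_atTop 0] with s hs
    filter_upwards [ae_restrict_mem measurableSet_Ioi] with b hb
    rw [norm_of_nonneg (mul_hkIntegrand_nonneg α A b₀ hs hb)]
    exact mul_hkIntegrand_le α b₀ hA hs hb
  · exact (integrableOn_rpow_mul_exp_neg_mul_rpow (by linarith) one_pos (by positivity)).const_mul _
  · filter_upwards [ae_restrict_mem measurableSet_Ioi] with b hb
    exact tendsto_mul_hkIntegrand_atTop α A b₀ hb

theorem stmt_4_general (α A b₀ : ℝ) (hA : 0 ≤ A) (hb₀ : 0 < b₀) :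
    (∀ b : ℝ, 0 < b →
      Tendsto (fun s : ℝ => (1 / (2 * b * s + 1)) * Real.exp (-A * s / (2 * b * s + 1)) * s)
        atTop (nhds ((1 / (2 * b)) * Real.exp (-A / (2 * b))))) ∧
    (1 < α →
      Tendsto (fun s : ℝ => s *
          (((α / b₀) ^ α / Real.Gamma α) *
            ∫ b in Ioi (0 : ℝ),
              (b ^ (α - 1) / (2 * b * s + 1)) *
                Real.exp (-A * s / (2 * b * s + 1) - α * b / b₀)))
        atTop
        (nhds (((α / b₀) ^ α / (2 * Real.Gamma α)) *
          ∫ b in Ioi (0 : ℝ), b ^ (α - 2) * Real.exp (-A / (2 * b) - α * b / b₀)))) := by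
  refine ⟨fun b hb => tendsto_rician_factor_mul_atTop A hb, fun hα => ?_⟩
  have h := (tendsto_integral_mul_hkIntegrand_atTop hα hA hb₀).const_mul
    ((α / b₀) ^ α / Gamma α)
  simp_rw [integral_const_mul] at h
  convert h using 2 with s
  · simp only [hkIntegrand]
    ring
  · ring

/-- (i) For fixed `b > 0`, `s·(1/(2bs+1))·exp(-As/(2bs+1)) → (1/(2b))·exp(-A/(2b))` as
`s → ∞`; (ii) consequently, for `α > 1`, the H-K MGF
`M(s) = ((α/b₀)^α/Γ(α)) ∫₀^∞ (b^{α-1}/(2bs+1)) exp(-As/(2bs+1) - αb/b₀) db`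
satisfies `s·M(s) → ((α/b₀)^α/(2Γ(α))) ∫₀^∞ b^{α-2} exp(-A/(2b) - αb/b₀) db`. -/
theorem stmt_4 (α A b₀ : ℝ) (hα : 0 < α) (hA : 0 ≤ A) (hb₀ : 0 < b₀) :
    (∀ b : ℝ, 0 < b →
      Tendsto (fun s : ℝ => (1 / (2 * b * s + 1)) * Real.exp (-A * s / (2 * b * s + 1)) * s)
        atTop (nhds ((1 / (2 * b)) * Real.exp (-A / (2 * b))))) ∧
    (1 < α →
      Tendsto (fun s : ℝ => s *
          (((α / b₀) ^ α / Real.Gamma α) *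
            ∫ b in Ioi (0 : ℝ),
              (b ^ (α - 1) / (2 * b * s + 1)) *
                Real.exp (-A * s / (2 * b * s + 1) - α * b / b₀)))
        atTop
        (nhds (((α / b₀) ^ α / (2 * Real.Gamma α)) *
          ∫ b in Ioi (0 : ℝ), b ^ (α - 2) * Real.exp (-A / (2 * b) - α * b / b₀)))) :=
  stmt_4_general α A b₀ hA hb₀
end

section
/- Let X be H-K distributed: X = |A·e^{iθ} + G|² where G is circular complex Gaussian with E|G|² = b (conditional), and b ~ Gamma(shape α, mean b₀), and let ρ = A²/b₀. Then E[X] = b₀(1+ρ), and the scintillation index σ² := E[X²]/E[X]² − 1 equals (α + 2αρ + 2)/(α(1+ρ)²). -/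
open Real MeasureTheory ProbabilityTheory Set
open scoped NNReal ENNReal

lemma int_pow_gauss {b : ℝ} (hb : 0 < b) (n : ℕ) :
    Integrable (fun x : ℝ => x ^ n * rexp (-b * x ^ 2)) := by
  have h := integrable_rpow_mul_exp_neg_mul_sq hb (s := (n : ℝ))
    (by exact_mod_cast neg_one_lt_zero.trans_le (Nat.cast_nonneg n))
  simpa [Real.rpow_natCast] using h

lemma odd_gauss (b : ℝ) {n : ℕ} (hn : Odd n) :
    (∫ x : ℝ, x ^ n * rexp (-b * x ^ 2)) = 0 := by
  have h : (∫ x : ℝ, (-x) ^ n * rexp (-b * (-x) ^ 2)) = ∫ x : ℝ, x ^ n * rexp (-b * x ^ 2) :=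
    integral_neg_eq_self (fun x : ℝ => x ^ n * rexp (-b * x ^ 2)) volume
  simp only [hn.neg_pow, neg_sq, neg_mul, integral_neg] at h
  simp only [neg_mul]
  linarith

lemma even_gauss {b : ℝ} (hb : 0 < b) (n : ℕ) :
    (∫ x : ℝ, x ^ (2 * n) * rexp (-b * x ^ 2))
      = b ^ (-(2 * (n : ℝ) + 1) / 2) * Real.Gamma ((2 * (n : ℝ) + 1) / 2) := by
  have hint := int_pow_gauss hb (2 * n)
  have hsplit := intervalIntegral.integral_Iic_add_Ioi (b := (0:ℝ)) (μ := volume)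
    hint.integrableOn hint.integrableOn
  have hneg : (∫ x in Iic (0:ℝ), x ^ (2 * n) * rexp (-b * x ^ 2))
      = ∫ x in Ioi (0:ℝ), x ^ (2 * n) * rexp (-b * x ^ 2) := by
    have h := integral_comp_neg_Ioi (0:ℝ) (fun x : ℝ => x ^ (2 * n) * rexp (-b * x ^ 2))
    simp only [Even.neg_pow (even_two_mul n), neg_sq, neg_zero] at h
    exact h.symm
  have hIoi : (∫ x in Ioi (0:ℝ), x ^ (2 * n) * rexp (-b * x ^ 2))
      = b ^ (-(2 * (n : ℝ) + 1) / 2) * (1 / 2) * Real.Gamma ((2 * (n : ℝ) + 1) / 2) := by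
    rw [show (∫ x in Ioi (0:ℝ), x ^ (2 * n) * rexp (-b * x ^ 2))
        = ∫ x in Ioi (0:ℝ), x ^ ((2 * n : ℕ) : ℝ) * rexp (-b * x ^ ((2:ℝ))) from
      setIntegral_congr_fun measurableSet_Ioi fun x _ => by
        rw [Real.rpow_natCast, show ((2:ℝ)) = ((2:ℕ):ℝ) by norm_num, Real.rpow_natCast]]
    rw [integral_rpow_mul_exp_neg_mul_rpow (by norm_num)
      (by exact_mod_cast neg_one_lt_zero.trans_le (Nat.cast_nonneg (2*n))) hb]
    push_cast
    ring_nf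
  have : (∫ x : ℝ, x ^ (2 * n) * rexp (-b * x ^ 2))
      = 2 * ∫ x in Ioi (0:ℝ), x ^ (2 * n) * rexp (-b * x ^ 2) := by
    rw [← hsplit, hneg]; ring
  rw [this, hIoi]; ring

lemma gamma_three_halves : Real.Gamma ((3:ℝ)/2) = √π / 2 := by
  rw [show (3:ℝ)/2 = 1/2 + 1 by norm_num, Real.Gamma_add_one (by norm_num),
    Real.Gamma_one_half_eq]
  ring

lemma J2 {b : ℝ} (hb : 0 < b) :
    (∫ x : ℝ, x ^ 2 * rexp (-b * x ^ 2)) = √(π / b) / (2 * b) := by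
  have h := even_gauss hb 1
  norm_num at h
  simp only [neg_mul]
  rw [h, gamma_three_halves]
  have h1 : b ^ (-((3:ℝ) / 2)) = (√b)⁻¹ * b⁻¹ := by
    rw [show (-((3:ℝ)/2)) = (-(1/2)) + (-1) by norm_num, Real.rpow_add hb, Real.rpow_neg_one,
      Real.rpow_neg hb.le, ← Real.sqrt_eq_rpow]
  rw [h1, Real.sqrt_div' π hb.le]
  have hsb : √b ≠ 0 := by positivity
  field_simp
  try ring
  try tauto

lemma J4 {b : ℝ} (hb : 0 < b) :
    (∫ x : ℝ, x ^ 4 * rexp (-b * x ^ 2)) = 3 * √(π / b) / (4 * b ^ 2) := by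
  have h := even_gauss hb 2
  norm_num at h
  simp only [neg_mul]
  rw [h]
  have hG : Real.Gamma (((5:ℝ))/2) = 3 * √π / 4 := by
    rw [show (5:ℝ)/2 = 3/2 + 1 by norm_num, Real.Gamma_add_one (by norm_num),
      gamma_three_halves]
    ring
  rw [hG]
  have h1 : b ^ (-((5:ℝ) / 2)) = (√b)⁻¹ * (b⁻¹ * b⁻¹) := by
    rw [show (-((5:ℝ)/2)) = (-(1/2)) + ((-1) + (-1)) by norm_num, Real.rpow_add hb,
      Real.rpow_add hb, Real.rpow_neg_one, Real.rpow_neg hb.le, ← Real.sqrt_eq_rpow]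
  rw [h1, Real.sqrt_div' π hb.le]
  have hsb : √b ≠ 0 := by positivity
  field_simp
  try ring
  try tauto

lemma ipoly (v : ℝ) (hv : 0 < v) (c0 c1 c2 c3 c4 : ℝ) :
    ∫ y, (c0 + c1 * y + c2 * y ^ 2 + c3 * y ^ 3 + c4 * y ^ 4)
        ∂(gaussianReal 0 (Real.toNNReal v))
      = c0 + c2 * v + c4 * (3 * v ^ 2) := by
  have hvne : Real.toNNReal v ≠ 0 := by
    simp only [ne_eq, Real.toNNReal_eq_zero, not_le]; exact hv
  have hcoe : ((Real.toNNReal v : ℝ≥0) : ℝ) = v := Real.coe_toNNReal v hv.le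
  set b : ℝ := (2 * v)⁻¹ with hbdef
  have hb : 0 < b := by positivity
  rw [gaussianReal_of_var_ne_zero _ hvne,
    show gaussianPDF 0 (Real.toNNReal v)
      = fun x => ((Real.toNNReal (gaussianPDFReal 0 (Real.toNNReal v) x) : ℝ≥0) : ℝ≥0∞)
      from rfl,
    integral_withDensity_eq_integral_smul
      ((measurable_gaussianPDFReal _ _).real_toNNReal) _]
  set C : ℝ := (√(2 * π * v))⁻¹ with hC
  have hpdf : ∀ x : ℝ, ((Real.toNNReal (gaussianPDFReal 0 (Real.toNNReal v) x) : ℝ≥0) : ℝ)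
      = C * rexp (-b * x ^ 2) := by
    intro x
    rw [Real.coe_toNNReal _ (gaussianPDFReal_nonneg _ _ _), gaussianPDFReal, hcoe]
    congr 1
    rw [hbdef]
    field_simp
    simp only [sub_zero]
  simp_rw [NNReal.smul_def, smul_eq_mul, hpdf]
  have hre : (fun x : ℝ => C * rexp (-b * x ^ 2) * (c0 + c1 * x + c2 * x ^ 2 + c3 * x ^ 3 + c4 * x ^ 4))
      = fun x : ℝ => (C * c0) * (x ^ 0 * rexp (-b * x ^ 2)) + ((C * c1) * (x ^ 1 * rexp (-b * x ^ 2))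
        + ((C * c2) * (x ^ 2 * rexp (-b * x ^ 2)) + ((C * c3) * (x ^ 3 * rexp (-b * x ^ 2))
        + (C * c4) * (x ^ 4 * rexp (-b * x ^ 2))))) := by
    funext x; ring
  rw [hre]
  have hI : ∀ (c : ℝ) (k : ℕ), Integrable (fun x : ℝ => c * (x ^ k * rexp (-b * x ^ 2))) :=
    fun c k => (int_pow_gauss hb k).const_mul c
  have h34 : Integrable (fun x : ℝ => C * c3 * (x ^ 3 * rexp (-b * x ^ 2))
      + C * c4 * (x ^ 4 * rexp (-b * x ^ 2))) := (hI _ 3).add (hI _ 4)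
  have h234 : Integrable (fun x : ℝ => C * c2 * (x ^ 2 * rexp (-b * x ^ 2))
      + (C * c3 * (x ^ 3 * rexp (-b * x ^ 2)) + C * c4 * (x ^ 4 * rexp (-b * x ^ 2)))) :=
    (hI _ 2).add h34
  have h1234 : Integrable (fun x : ℝ => C * c1 * (x ^ 1 * rexp (-b * x ^ 2))
      + (C * c2 * (x ^ 2 * rexp (-b * x ^ 2)) + (C * c3 * (x ^ 3 * rexp (-b * x ^ 2))
      + C * c4 * (x ^ 4 * rexp (-b * x ^ 2))))) := (hI _ 1).add h234
  rw [integral_add (hI _ 0) h1234, integral_add (hI _ 1) h234, integral_add (hI _ 2) h34,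
    integral_add (hI _ 3) (hI _ 4)]
  simp_rw [integral_const_mul]
  rw [odd_gauss b odd_one, odd_gauss b (by decide : Odd 3), J2 hb, J4 hb]
  have h0 : (∫ x : ℝ, x ^ 0 * rexp (-b * x ^ 2)) = √(π / b) := by
    simp only [pow_zero, one_mul]
    exact integral_gaussian b
  rw [h0]
  have hsq : √(π / b) = √(2 * π * v) := by
    rw [hbdef]
    congr 1
    field_simp
  have hS : C * √(π / b) = 1 := by
    rw [hsq, hC, inv_mul_cancel₀ (by positivity)]
  rw [show C * c0 * √(π / b) +
      (C * c1 * 0 + (C * c2 * (√(π / b) / (2 * b)) + (C * c3 * 0 + C * c4 * (3 * √(π / b) / (4 * b ^ 2)))))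
      = (C * √(π / b)) * (c0 + c2 / (2 * b) + c4 * (3 / (4 * b ^ 2))) by ring, hS, one_mul, hbdef]
  have hvne' : v ≠ 0 := hv.ne'
  field_simp
  ring

lemma gintegrable {s r : ℝ} (hs : -1 < s) (hr : 0 < r) :
    IntegrableOn (fun b : ℝ => b ^ s * rexp (-(r * b))) (Ioi 0) := by
  have h := integrableOn_rpow_mul_exp_neg_mul_rpow hs (one_pos : (0:ℝ) < 1) hr
  simpa [Real.rpow_one, neg_mul] using h

lemma geq (r : ℝ) (a : ℝ) (k : ℕ) :
    EqOn (fun b : ℝ => b ^ (a + k - 1) * rexp (-(r * b)))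
      (fun b : ℝ => b ^ (a - 1) * rexp (-(r * b)) * b ^ k) (Ioi 0) := fun b hb => by
  simp only
  rw [← Real.rpow_natCast b k, show a + (k:ℝ) - 1 = (a - 1) + k by ring,
    Real.rpow_add (by exact hb : (0:ℝ) < b)]
  ring

lemma gmomI {a r : ℝ} (ha : 0 < a) (hr : 0 < r) (k : ℕ) :
    IntegrableOn (fun b : ℝ => b ^ (a - 1) * rexp (-(r * b)) * b ^ k) (Ioi 0) := by
  have hs : -1 < a + k - 1 := by
    have : (0:ℝ) ≤ k := Nat.cast_nonneg k
    linarith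
  exact (gintegrable hs hr).congr_fun (geq r a k) measurableSet_Ioi

lemma gmom {a r : ℝ} (ha : 0 < a) (hr : 0 < r) (k : ℕ) :
    ∫ b in Ioi (0:ℝ), b ^ (a - 1) * rexp (-(r * b)) * b ^ k
      = (1 / r) ^ (a + k) * Real.Gamma (a + k) := by
  rw [← setIntegral_congr_fun measurableSet_Ioi (geq r a k)]
  exact integral_rpow_mul_exp_neg_mul_Ioi
    (show 0 < a + (k:ℝ) by have : (0:ℝ) ≤ k := Nat.cast_nonneg k; linarith) hr

/-- Scintillation index of the H-K distribution:
`X = |A e^{iθ} + G|²` where, conditionally on `b`, `G` is a mean-zero circular complex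
Gaussian with variance `b` (real and imaginary parts iid `N(0, b/2)`), and
`b ~ Gamma(shape α, mean b₀)`. Then `E[X] = b₀(1+ρ)` and
`E[X²]/(E[X])² − 1 = (α + 2αρ + 2)/(α(1+ρ)²)` with `ρ = A²/b₀`. -/
theorem stmt_8 (α b₀ A : ℝ) (hα : 0 < α) (hb₀ : 0 < b₀) (hA : 0 ≤ A) :
    let γpdf : ℝ → ℝ := fun b =>
      (α / b₀) ^ α * b ^ (α - 1) * Real.exp (-α * b / b₀) / Real.Gamma α
    let m : ℕ → ℝ := fun ν =>
      ∫ b in Ioi (0 : ℝ), γpdf b *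
        ∫ x, ∫ y, ((A + x) ^ 2 + y ^ 2) ^ ν
          ∂(gaussianReal 0 (Real.toNNReal (b / 2))) ∂(gaussianReal 0 (Real.toNNReal (b / 2)))
    let ρ : ℝ := A ^ 2 / b₀
    m 1 = b₀ * (1 + ρ) ∧
      m 2 / (m 1) ^ 2 - 1 = (α + 2 * α * ρ + 2) / (α * (1 + ρ) ^ 2) := by
  intro γpdf m ρ
  have hρ : ρ = A ^ 2 / b₀ := rfl
  have hγ : ∀ b : ℝ, γpdf b
      = (α / b₀) ^ α * b ^ (α - 1) * rexp (-α * b / b₀) / Real.Gamma α := fun _ => rfl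
  have hr : 0 < α / b₀ := by positivity
  have hΓ : 0 < Real.Gamma α := Real.Gamma_pos_of_pos hα
  set K : ℝ := (α / b₀) ^ α / Real.Gamma α with hK
  -- inner double integrals
  have hin1 : ∀ b : ℝ, b ∈ Ioi (0:ℝ) →
      (∫ x, ∫ y, ((A + x) ^ 2 + y ^ 2) ^ 1
        ∂(gaussianReal 0 (Real.toNNReal (b / 2))) ∂(gaussianReal 0 (Real.toNNReal (b / 2))))
      = A ^ 2 + b := by
    intro b hb
    have hv : 0 < b / 2 := by simpa using (half_pos (show (0:ℝ) < b from hb))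
    have hy : (fun x : ℝ => ∫ y, ((A + x) ^ 2 + y ^ 2) ^ 1
        ∂(gaussianReal 0 (Real.toNNReal (b / 2))))
        = fun x : ℝ => (A + x) ^ 2 + b / 2 := by
      funext x
      rw [show (fun y : ℝ => ((A + x) ^ 2 + y ^ 2) ^ 1)
        = (fun y : ℝ => (A + x) ^ 2 + 0 * y + 1 * y ^ 2 + 0 * y ^ 3 + 0 * y ^ 4)
        from funext fun y => by ring]
      rw [ipoly (b/2) hv _ 0 1 0 0]
      ring
    rw [hy]
    rw [show (fun x : ℝ => (A + x) ^ 2 + b / 2)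
      = (fun x : ℝ => (A ^ 2 + b / 2) + (2 * A) * x + 1 * x ^ 2 + 0 * x ^ 3 + 0 * x ^ 4)
      from funext fun x => by ring]
    rw [ipoly (b/2) hv _ _ 1 0 0]
    ring
  have hin2 : ∀ b : ℝ, b ∈ Ioi (0:ℝ) →
      (∫ x, ∫ y, ((A + x) ^ 2 + y ^ 2) ^ 2
        ∂(gaussianReal 0 (Real.toNNReal (b / 2))) ∂(gaussianReal 0 (Real.toNNReal (b / 2))))
      = A ^ 4 + 4 * A ^ 2 * b + 2 * b ^ 2 := by
    intro b hb
    have hv : 0 < b / 2 := by simpa using (half_pos (show (0:ℝ) < b from hb))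
    have hy : (fun x : ℝ => ∫ y, ((A + x) ^ 2 + y ^ 2) ^ 2
        ∂(gaussianReal 0 (Real.toNNReal (b / 2))))
        = fun x : ℝ => (A + x) ^ 4 + 2 * (A + x) ^ 2 * (b / 2) + 3 * (b / 2) ^ 2 := by
      funext x
      rw [show (fun y : ℝ => ((A + x) ^ 2 + y ^ 2) ^ 2)
        = (fun y : ℝ => (A + x) ^ 4 + 0 * y + (2 * (A + x) ^ 2) * y ^ 2 + 0 * y ^ 3 + 1 * y ^ 4)
        from funext fun y => by ring]
      rw [ipoly (b/2) hv _ 0 _ 0 1]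
      ring
    rw [hy]
    rw [show (fun x : ℝ => (A + x) ^ 4 + 2 * (A + x) ^ 2 * (b / 2) + 3 * (b / 2) ^ 2)
      = (fun x : ℝ => (A ^ 4 + A ^ 2 * b + 3 * b ^ 2 / 4) + (4 * A ^ 3 + 2 * A * b) * x
          + (6 * A ^ 2 + b) * x ^ 2 + (4 * A) * x ^ 3 + 1 * x ^ 4)
      from funext fun x => by ring]
    rw [ipoly (b/2) hv _ _ _ _ 1]
    ring
  -- atoms
  have hone : (α / b₀) ^ α * (1 / (α / b₀)) ^ α = 1 := by
    rw [← Real.mul_rpow (le_of_lt hr) (by positivity), mul_one_div_cancel hr.ne', Real.one_rpow]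
  have hP : (0:ℝ) < (α / b₀) ^ α := Real.rpow_pos_of_pos hr α
  have hQ : (1 / (α / b₀)) ^ α = ((α / b₀) ^ α)⁻¹ := eq_inv_of_mul_eq_one_right hone
  have hg1 : Real.Gamma (α + 1) = α * Real.Gamma α := Real.Gamma_add_one hα.ne'
  have hg2 : Real.Gamma (α + 2) = (α + 1) * (α * Real.Gamma α) := by
    rw [show α + 2 = (α + 1) + 1 by ring, Real.Gamma_add_one (by positivity), hg1]
  have hp1 : (1 / (α / b₀)) ^ (α + 1) = (1 / (α / b₀)) ^ α * (1 / (α / b₀)) := by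
    rw [Real.rpow_add (by positivity), Real.rpow_one]
  have hp2 : (1 / (α / b₀)) ^ (α + 2) = (1 / (α / b₀)) ^ α * ((1 / (α / b₀)) * (1 / (α / b₀))) := by
    rw [show α + 2 = (α + 1) + 1 by ring, Real.rpow_add (by positivity), Real.rpow_one, hp1]
    ring
  -- m 1
  have hm1 : m 1 = A ^ 2 + b₀ := by
    have hmdef : m 1 = ∫ b in Ioi (0:ℝ), γpdf b *
        ∫ x, ∫ y, ((A + x) ^ 2 + y ^ 2) ^ 1
          ∂(gaussianReal 0 (Real.toNNReal (b / 2))) ∂(gaussianReal 0 (Real.toNNReal (b / 2))) := rfl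
    rw [hmdef, setIntegral_congr_fun measurableSet_Ioi
      (fun b hb => by rw [hin1 b hb] :
        EqOn _ (fun b : ℝ => γpdf b * (A ^ 2 + b)) (Ioi (0:ℝ)))]
    have hsplit : (∫ b in Ioi (0:ℝ), γpdf b * (A ^ 2 + b))
        = (K * A ^ 2) * ((1 / (α / b₀)) ^ (α + (0:ℕ)) * Real.Gamma (α + (0:ℕ)))
          + K * ((1 / (α / b₀)) ^ (α + (1:ℕ)) * Real.Gamma (α + (1:ℕ))) := by
      rw [← gmom hα hr 0, ← gmom hα hr 1, ← integral_const_mul, ← integral_const_mul,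
        ← integral_add ((gmomI hα hr 0).const_mul _) ((gmomI hα hr 1).const_mul _)]
      refine setIntegral_congr_fun measurableSet_Ioi fun b hb => ?_
      simp only [hγ, hK]
      rw [show -(α / b₀ * b) = -α * b / b₀ by ring]
      ring
    rw [hsplit]
    push_cast
    simp only [add_zero]
    rw [hg1, hp1, hK, hQ]
    field_simp [hP.ne', hΓ.ne', hα.ne', hb₀.ne']
  -- m 2
  have hm2 : m 2 = A ^ 4 + 4 * A ^ 2 * b₀ + 2 * (α + 1) / α * b₀ ^ 2 := by
    have hmdef : m 2 = ∫ b in Ioi (0:ℝ), γpdf b *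
        ∫ x, ∫ y, ((A + x) ^ 2 + y ^ 2) ^ 2
          ∂(gaussianReal 0 (Real.toNNReal (b / 2))) ∂(gaussianReal 0 (Real.toNNReal (b / 2))) := rfl
    rw [hmdef, setIntegral_congr_fun measurableSet_Ioi
      (fun b hb => by rw [hin2 b hb] :
        EqOn _ (fun b : ℝ => γpdf b * (A ^ 4 + 4 * A ^ 2 * b + 2 * b ^ 2)) (Ioi (0:ℝ)))]
    have hsplit : (∫ b in Ioi (0:ℝ), γpdf b * (A ^ 4 + 4 * A ^ 2 * b + 2 * b ^ 2))
        = (K * A ^ 4) * ((1 / (α / b₀)) ^ (α + (0:ℕ)) * Real.Gamma (α + (0:ℕ)))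
          + ((K * (4 * A ^ 2)) * ((1 / (α / b₀)) ^ (α + (1:ℕ)) * Real.Gamma (α + (1:ℕ)))
          + (K * 2) * ((1 / (α / b₀)) ^ (α + (2:ℕ)) * Real.Gamma (α + (2:ℕ)))) := by
      have hI0 : Integrable (fun b : ℝ => (K * A ^ 4) * (b ^ (α - 1) * rexp (-(α / b₀ * b)) * b ^ 0))
          (volume.restrict (Ioi 0)) := (gmomI hα hr 0).const_mul _
      have hI1 : Integrable (fun b : ℝ => (K * (4 * A ^ 2)) * (b ^ (α - 1) * rexp (-(α / b₀ * b)) * b ^ 1))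
          (volume.restrict (Ioi 0)) := (gmomI hα hr 1).const_mul _
      have hI2 : Integrable (fun b : ℝ => (K * 2) * (b ^ (α - 1) * rexp (-(α / b₀ * b)) * b ^ 2))
          (volume.restrict (Ioi 0)) := (gmomI hα hr 2).const_mul _
      have hI12 : Integrable (fun b : ℝ =>
          (K * (4 * A ^ 2)) * (b ^ (α - 1) * rexp (-(α / b₀ * b)) * b ^ 1)
          + (K * 2) * (b ^ (α - 1) * rexp (-(α / b₀ * b)) * b ^ 2))
          (volume.restrict (Ioi 0)) := hI1.add hI2
      rw [← gmom hα hr 0, ← gmom hα hr 1, ← gmom hα hr 2, ← integral_const_mul,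
        ← integral_const_mul, ← integral_const_mul,
        ← integral_add hI1 hI2, ← integral_add hI0 hI12]
      refine setIntegral_congr_fun measurableSet_Ioi fun b hb => ?_
      simp only [hγ, hK]
      rw [show -(α / b₀ * b) = -α * b / b₀ by ring]
      ring
    rw [hsplit]
    push_cast
    simp only [add_zero]
    rw [hg1, hg2, hp1, hp2, hK, hQ]
    field_simp [hP.ne', hΓ.ne', hα.ne', hb₀.ne']
    ring
  constructor
  · rw [hm1, hρ]; field_simp; ring
  · rw [hm1, hm2, hρ]
    have hne : A ^ 2 + b₀ ≠ 0 := by positivity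
    field_simp
    ring
end
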